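/- arXiv:1210.2868 — 2 statements merged into one kernel-verified Lean document; each statement's English description precedes it below -/
import Mathlib

section
/- Let K be an algebraically closed field of characteristic p > 0 and f ∈ K[[x]] with f(0) = 0 and finite Milnor number μ. Then f is right (2μ − m(f) + 2)-determined: every g ∈ K[[x]] whose power series expansion agrees with f up to and including degree 2μ − m(f) + 2 is right equivalent to f. -/
/-! In one variable the Milnor algebra of `f` is `K⟦X⟧ ⧸ (X ^ d)` with `d` the order of `f'`, so
`d ≤ μ`, and `m ≤ d + 1` because `f'` has a nonzero coefficient in degree `d`. Write the coordinate
change as `X + u` with `X ^ 2 ∣ u` and solve `f (X + u) = g` by Newton's method. If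
`g - f (X + u)` has order `t`, the correction `δ = (g - f (X + u)) / f'` has order `t - d`, and the
new error `g - f (X + u + δ)` is made of the quadratic Taylor remainder of `f`, of order at least
`m - 2 + 2 (t - d)`, and of `(f' (X + u) - f') δ`, of order at least `(d + 1) + (t - d)`; both
exceed `t` once `t ≥ 2 d - m + 3`. The corrections converge `X`-adically, and substituting a
series `X + u` with `X ^ 2 ∣ u` is an automorphism of `K⟦X⟧`. -/

open PowerSeries

noncomputable def milnor (K : Type*) [Field K] (f : PowerSeries K) : ℕ :=
  Module.finrank K (PowerSeries K ⧸ Ideal.span {f.derivativeFun})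

def MilnorFinite (K : Type*) [Field K] (f : PowerSeries K) : Prop :=
  Module.Finite K (PowerSeries K ⧸ Ideal.span {f.derivativeFun})

def RightEquiv (K : Type*) [Field K] (f g : PowerSeries K) : Prop :=
  ∃ Φ : PowerSeries K ≃ₐ[K] PowerSeries K, Φ f = g

namespace PowerSeries

open Finset

variable {R : Type*} [CommRing R]

theorem X_pow_dvd_subst_sub_sum_range {v : R⟦X⟧} (hv : X ∣ v) (f : R⟦X⟧) (n : ℕ) :
    X ^ n ∣ f.subst v - ∑ i ∈ range n, C (coeff i f) * v ^ i := by
  have hv' : HasSubst v := .of_constantCoeff_zero' (X_dvd_iff.mp hv)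
  obtain ⟨h, hh⟩ : X ^ n ∣ f - (trunc n f : R⟦X⟧) := by
    rw [X_pow_dvd_iff]
    intro i hi
    simp [coeff_trunc, hi]
  have htrunc : (trunc n f : R⟦X⟧).subst v = ∑ i ∈ range n, C (coeff i f) * v ^ i := by
    rw [subst_coe hv', Polynomial.aeval_def, eval₂_trunc_eq_sum_range]
    rfl
  rw [← htrunc, ← subst_sub hv', hh, subst_mul hv', subst_pow hv', subst_X hv']
  exact (pow_dvd_pow_of_dvd hv n).mul_right _

theorem X_pow_dvd_sum_range_C_mul {f : R⟦X⟧} {m N n : ℕ} (hf : X ^ m ∣ f) {T : ℕ → R⟦X⟧}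
    (hT : ∀ j, m ≤ j → X ^ N ∣ T j) : X ^ N ∣ ∑ j ∈ range n, C (coeff j f) * T j := by
  refine dvd_sum fun j _ => ?_
  rcases lt_or_ge j m with hj | hj
  · rw [X_pow_dvd_iff.mp hf j hj, map_zero, zero_mul]
    exact dvd_zero _
  · exact (hT j hj).mul_left _

theorem X_pow_dvd_add_pow_sub_pow {a δ : R⟦X⟧} {s : ℕ} (ha : X ∣ a) (hδ : X ^ (s + 1) ∣ δ)
    (j : ℕ) : X ^ (j + s) ∣ (a + δ) ^ j - a ^ j := by
  have haδ : X ∣ a + δ := dvd_add ha ((dvd_pow_self X s.succ_ne_zero).trans hδ)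
  induction j with
  | zero => simp
  | succ j ih =>
    have key : (a + δ) ^ (j + 1) - a ^ (j + 1) = (a + δ) * ((a + δ) ^ j - a ^ j) + δ * a ^ j := by
      ring
    rw [key]
    refine dvd_add ?_ ?_
    · rw [show j + 1 + s = 1 + (j + s) by omega, pow_add, pow_one]
      exact mul_dvd_mul haδ ih
    · rw [show j + 1 + s = (s + 1) + j by omega, pow_add]
      exact mul_dvd_mul hδ (pow_dvd_pow_of_dvd ha j)

theorem X_pow_dvd_add_pow_sub_pow_sub_mul {a δ : R⟦X⟧} {s : ℕ} (ha : X ∣ a)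
    (hδ : X ^ (s + 1) ∣ δ) (j : ℕ) :
    X ^ (j + 2 * s) ∣ (a + δ) ^ j - a ^ j - (j : R⟦X⟧) * a ^ (j - 1) * δ := by
  have haδ : X ∣ a + δ := dvd_add ha ((dvd_pow_self X s.succ_ne_zero).trans hδ)
  suffices h : ∀ j, X ^ (j + 1 + 2 * s) ∣
      (a + δ) ^ (j + 1) - a ^ (j + 1) - ((j + 1 : ℕ) : R⟦X⟧) * a ^ j * δ by
    rcases j with _ | j
    · simp
    · simpa using h j
  intro j
  induction j with
  | zero => simp
  | succ j ih =>
    have key : (a + δ) ^ (j + 2) - a ^ (j + 2) - ((j + 2 : ℕ) : R⟦X⟧) * a ^ (j + 1) * δ =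
        (a + δ) * ((a + δ) ^ (j + 1) - a ^ (j + 1) - ((j + 1 : ℕ) : R⟦X⟧) * a ^ j * δ) +
          ((j + 1 : ℕ) : R⟦X⟧) * a ^ j * δ ^ 2 := by
      push_cast; ring
    rw [key]
    refine dvd_add ?_ ?_
    · rw [show j + 1 + 1 + 2 * s = 1 + (j + 1 + 2 * s) by omega, pow_add, pow_one]
      exact mul_dvd_mul haδ ih
    · rw [show j + 1 + 1 + 2 * s = j + 2 * (s + 1) by omega, pow_add, pow_mul']
      exact mul_dvd_mul ((pow_dvd_pow_of_dvd ha j).mul_left _) (pow_dvd_pow_of_dvd hδ 2)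

theorem X_pow_dvd_subst_add_sub_subst {q a δ : R⟦X⟧} {r s : ℕ} (hq : X ^ r ∣ q) (ha : X ∣ a)
    (hδ : X ^ (s + 1) ∣ δ) : X ^ (r + s) ∣ q.subst (a + δ) - q.subst a := by
  have haδ : X ∣ a + δ := dvd_add ha ((dvd_pow_self X s.succ_ne_zero).trans hδ)
  set n := r + s
  have key : q.subst (a + δ) - q.subst a =
      (q.subst (a + δ) - ∑ j ∈ range n, C (coeff j q) * (a + δ) ^ j) -
        (q.subst a - ∑ j ∈ range n, C (coeff j q) * a ^ j) +
          ∑ j ∈ range n, C (coeff j q) * ((a + δ) ^ j - a ^ j) := by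
    simp only [mul_sub, sum_sub_distrib]; ring
  rw [key]
  refine dvd_add (dvd_sub (X_pow_dvd_subst_sub_sum_range haδ q n)
    (X_pow_dvd_subst_sub_sum_range ha q n)) (X_pow_dvd_sum_range_C_mul hq fun j hj => ?_)
  exact (pow_dvd_pow X (by omega)).trans (X_pow_dvd_add_pow_sub_pow ha hδ j)

theorem sum_range_C_coeff_derivative_mul_pow (f b : R⟦X⟧) (n : ℕ) :
    ∑ j ∈ range n, C (coeff j (d⁄dX R f)) * b ^ j =
      ∑ j ∈ range (n + 1), C (coeff j f) * ((j : R⟦X⟧) * b ^ (j - 1)) := by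
  rw [sum_range_succ']
  simp only [coeff_derivative, map_mul, map_add, map_natCast, map_one, Nat.cast_zero, zero_mul,
    mul_zero, add_zero, Nat.add_sub_cancel, Nat.cast_add, Nat.cast_one]
  refine sum_congr rfl fun j _ => ?_
  ring

theorem X_pow_dvd_subst_add_sub_subst_sub_mul {f a δ : R⟦X⟧} {m s : ℕ} (hf : X ^ m ∣ f)
    (ha : X ∣ a) (hδ : X ^ (s + 1) ∣ δ) :
    X ^ (m + 2 * s) ∣ f.subst (a + δ) - f.subst a - (d⁄dX R f).subst a * δ := by
  have haδ : X ∣ a + δ := dvd_add ha ((dvd_pow_self X s.succ_ne_zero).trans hδ)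
  set n := m + 2 * s
  have key : f.subst (a + δ) - f.subst a - (d⁄dX R f).subst a * δ =
      (f.subst (a + δ) - ∑ j ∈ range (n + 1), C (coeff j f) * (a + δ) ^ j) -
        (f.subst a - ∑ j ∈ range (n + 1), C (coeff j f) * a ^ j) -
        ((d⁄dX R f).subst a - ∑ j ∈ range n, C (coeff j (d⁄dX R f)) * a ^ j) * δ +
          ∑ j ∈ range (n + 1), C (coeff j f) *
            ((a + δ) ^ j - a ^ j - (j : R⟦X⟧) * a ^ (j - 1) * δ) := by
    rw [sum_range_C_coeff_derivative_mul_pow]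
    simp only [mul_sub, sub_mul, sum_sub_distrib, sum_mul, mul_assoc]
    ring
  rw [key]
  refine dvd_add (dvd_sub (dvd_sub ?_ ?_) ((X_pow_dvd_subst_sub_sum_range ha _ n).mul_right δ))
    (X_pow_dvd_sum_range_C_mul hf fun j hj => ?_)
  · exact (pow_dvd_pow X n.le_succ).trans (X_pow_dvd_subst_sub_sum_range haδ f (n + 1))
  · exact (pow_dvd_pow X n.le_succ).trans (X_pow_dvd_subst_sub_sum_range ha f (n + 1))
  · exact (pow_dvd_pow X (by omega)).trans (X_pow_dvd_add_pow_sub_pow_sub_mul ha hδ j)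

theorem exists_newton_step {f g u : R⟦X⟧} {e : R⟦X⟧ˣ} {m d t : ℕ} (hf : X ^ m ∣ f)
    (hf' : d⁄dX R f = X ^ d * (e : R⟦X⟧)) (hu : X ^ 2 ∣ u) (hdt : d < t)
    (ht : 2 * d + 3 ≤ m + t) (hr : X ^ t ∣ g - f.subst (X + u)) :
    ∃ δ, X ^ (t - d) ∣ δ ∧ X ^ (t + 1) ∣ g - f.subst (X + u + δ) := by
  obtain ⟨k, rfl⟩ : ∃ k, t = d + (k + 1) := ⟨t - d - 1, by omega⟩
  obtain ⟨r, hr⟩ := hr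
  set δ := X ^ (k + 1) * r * ((e⁻¹ : R⟦X⟧ˣ) : R⟦X⟧)
  have hδ : X ^ (k + 1) ∣ δ := (dvd_mul_right _ _).mul_right _
  have hdiv : d⁄dX R f * δ = g - f.subst (X + u) := by
    rw [hr, hf', pow_add]
    calc _ = X ^ d * X ^ (k + 1) * r * (e * ↑e⁻¹ : R⟦X⟧) := by ring
      _ = _ := by rw [Units.mul_inv, mul_one]
  have hquad := X_pow_dvd_subst_add_sub_subst_sub_mul hf
    (dvd_add (dvd_refl X) ((dvd_pow_self X two_ne_zero).trans hu)) hδ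
  have hlin : X ^ (d + 1) ∣ (d⁄dX R f).subst (X + u) - d⁄dX R f := by
    simpa using X_pow_dvd_subst_add_sub_subst (r := d) (s := 1) ⟨_, hf'⟩ (dvd_refl X) hu
  refine ⟨δ, by rwa [Nat.add_sub_cancel_left], ?_⟩
  have key : g - f.subst (X + u + δ) =
      (g - f.subst (X + u) - d⁄dX R f * δ) -
        (f.subst (X + u + δ) - f.subst (X + u) - (d⁄dX R f).subst (X + u) * δ) -
          ((d⁄dX R f).subst (X + u) - d⁄dX R f) * δ := by ring
  rw [key, hdiv, sub_self, zero_sub]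
  refine dvd_sub (dvd_neg.mpr ((pow_dvd_pow X (by omega)).trans hquad)) ?_
  rw [show d + (k + 1) + 1 = d + 1 + (k + 1) by omega, pow_add]
  exact mul_dvd_mul hlin hδ

theorem exists_X_pow_dvd_sub_of_X_pow_dvd_succ_sub {u : ℕ → R⟦X⟧}
    (hu : ∀ n, X ^ n ∣ u (n + 1) - u n) : ∃ U, ∀ n, X ^ n ∣ U - u n := by
  have smod_iff : ∀ n (a b : R⟦X⟧),
      a ≡ b [SMOD ((Ideal.span {(X : R⟦X⟧)}) ^ n • ⊤ : Submodule R⟦X⟧ R⟦X⟧)] ↔ X ^ n ∣ b - a := by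
    intro n a b
    rw [SModEq.sub_mem, smul_eq_mul, Ideal.mul_top, Ideal.span_singleton_pow,
      Ideal.mem_span_singleton, ← dvd_neg, neg_sub]
  have hcauchy : ∀ m k, X ^ m ∣ u (m + k) - u m := by
    intro m k
    induction k with
    | zero => simp
    | succ k ih =>
      rw [← add_assoc, show u (m + k + 1) - u m = (u (m + k + 1) - u (m + k)) + (u (m + k) - u m)
        by ring]
      exact dvd_add ((pow_dvd_pow X (by omega)).trans (hu _)) ih
  obtain ⟨U, hU⟩ := IsPrecomplete.prec (I := Ideal.span {X}) inferInstance (f := u)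
    fun {m n} hmn => by
      rw [smod_iff, ← Nat.add_sub_cancel' hmn]
      exact hcauchy m (n - m)
  exact ⟨U, fun n => (smod_iff n _ _).mp (hU n)⟩

theorem eq_zero_of_forall_X_pow_dvd {h : R⟦X⟧} (hh : ∀ n, X ^ n ∣ h) : h = 0 := by
  ext k
  exact X_pow_dvd_iff.mp (hh (k + 1)) k k.lt_succ_self

theorem le_add_one_of_derivative_eq_X_pow_mul [Nontrivial R] {f : R⟦X⟧} {e : R⟦X⟧ˣ} {m d : ℕ}
    (hf : X ^ m ∣ f) (hf' : d⁄dX R f = X ^ d * (e : R⟦X⟧)) : m ≤ d + 1 := by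
  by_contra! h
  have hcoeff : coeff d (d⁄dX R f) = constantCoeff (e : R⟦X⟧) := by
    rw [hf', coeff_X_pow_mul', if_pos le_rfl, Nat.sub_self, coeff_zero_eq_constantCoeff]
  rw [coeff_derivative, X_pow_dvd_iff.mp hf (d + 1) h, zero_mul] at hcoeff
  exact (isUnit_iff_constantCoeff.mp e.isUnit).ne_zero hcoeff.symm

theorem exists_newton_sequence [Nontrivial R] {f g : R⟦X⟧} {e : R⟦X⟧ˣ} {m d t : ℕ}
    (hf : X ^ m ∣ f) (hf' : d⁄dX R f = X ^ d * (e : R⟦X⟧)) (ht : 2 * d + 3 ≤ m + t)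
    (hg : X ^ t ∣ g - f) : ∃ u : ℕ → R⟦X⟧, ∀ n,
      X ^ 2 ∣ u n ∧ X ^ (t + n) ∣ g - f.subst (X + u n) ∧ X ^ n ∣ u (n + 1) - u n := by
  have hmd := le_add_one_of_derivative_eq_X_pow_mul hf hf'
  have step : ∀ (n : ℕ) (u : R⟦X⟧), ∃ δ, X ^ 2 ∣ u → X ^ (t + n) ∣ g - f.subst (X + u) →
      X ^ (t + n - d) ∣ δ ∧ X ^ (t + n + 1) ∣ g - f.subst (X + u + δ) := by
    intro n u
    by_cases hu : X ^ 2 ∣ u ∧ X ^ (t + n) ∣ g - f.subst (X + u)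
    · obtain ⟨δ, hδ⟩ := exists_newton_step hf hf' hu.1 (by omega) (by omega) hu.2
      exact ⟨δ, fun _ _ => hδ⟩
    · exact ⟨0, fun h h' => absurd ⟨h, h'⟩ hu⟩
  choose δ hδ using step
  let u : ℕ → R⟦X⟧ := fun n => Nat.rec 0 (fun k uk => uk + δ k uk) n
  have hu : ∀ n, X ^ 2 ∣ u n ∧ X ^ (t + n) ∣ g - f.subst (X + u n) := by
    intro n
    induction n with
    | zero => simpa [u] using hg
    | succ n ih =>
      have hδn := hδ n (u n) ih.1 ih.2
      refine ⟨dvd_add ih.1 ((pow_dvd_pow X (by omega)).trans hδn.1), ?_⟩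
      simpa only [u, ← add_assoc] using hδn.2
  refine ⟨u, fun n => ⟨(hu n).1, (hu n).2, ?_⟩⟩
  have hδn := (hδ n (u n) (hu n).1 (hu n).2).1
  exact (pow_dvd_pow X (show n ≤ t + n - d by omega)).trans (by simpa [u] using hδn)

theorem exists_subst_X_add_eq [Nontrivial R] {f g : R⟦X⟧} {e : R⟦X⟧ˣ} {m d t : ℕ}
    (hf : X ^ m ∣ f) (hf' : d⁄dX R f = X ^ d * (e : R⟦X⟧)) (ht : 2 * d + 3 ≤ m + t)
    (hg : X ^ t ∣ g - f) : ∃ u, X ^ 2 ∣ u ∧ f.subst (X + u) = g := by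
  obtain ⟨u, hu⟩ := exists_newton_sequence hf hf' ht hg
  obtain ⟨U, hU⟩ := exists_X_pow_dvd_sub_of_X_pow_dvd_succ_sub fun n => (hu n).2.2
  refine ⟨U, by simpa using dvd_add (hU 2) (hu 2).1, ?_⟩
  refine (sub_eq_zero.mp (eq_zero_of_forall_X_pow_dvd fun n => ?_)).symm
  have key : g - f.subst (X + U) = (g - f.subst (X + u (n + 1))) -
      (f.subst (X + u (n + 1) + (U - u (n + 1))) - f.subst (X + u (n + 1))) := by
    rw [add_assoc, add_sub_cancel]; ring
  rw [key]
  refine dvd_sub ((pow_dvd_pow X (by omega)).trans (hu (n + 1)).2.1) ?_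
  simpa using X_pow_dvd_subst_add_sub_subst (r := 0) (by simp)
    (dvd_add (dvd_refl X) ((dvd_pow_self X two_ne_zero).trans (hu (n + 1)).1)) (hU (n + 1))

noncomputable def substAlgEquiv {φ : R⟦X⟧} (hφ : constantCoeff φ = 0) (hφ' : IsUnit (coeff 1 φ)) :
    R⟦X⟧ ≃ₐ[R] R⟦X⟧ :=
  AlgEquiv.ofAlgHom (substAlgHom (HasSubst.of_constantCoeff_zero' hφ))
    (substAlgHom (HasSubst.substInvOfIsUnit φ hφ'))
    (by
      ext1 f
      simp only [AlgHom.comp_apply, coe_substAlgHom, AlgHom.id_apply]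
      rw [subst_comp_subst_apply (.substInvOfIsUnit φ hφ') (.of_constantCoeff_zero' hφ),
        subst_substInvOfIsUnit_left φ hφ hφ', X_subst])
    (by
      ext1 f
      simp only [AlgHom.comp_apply, coe_substAlgHom, AlgHom.id_apply]
      rw [subst_comp_subst_apply (.of_constantCoeff_zero' hφ) (.substInvOfIsUnit φ hφ'),
        subst_substInvOfIsUnit_right φ hφ hφ', X_subst])

theorem substAlgEquiv_apply {φ : R⟦X⟧} (hφ : constantCoeff φ = 0) (hφ' : IsUnit (coeff 1 φ))
    (f : R⟦X⟧) : substAlgEquiv hφ hφ' f = f.subst φ :=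
  congrFun (coe_substAlgHom (.of_constantCoeff_zero' hφ)) f

theorem le_finrank_quotient_span_singleton_of_X_pow_dvd {K : Type*} [Field K] {q : K⟦X⟧}
    [Module.Finite K (K⟦X⟧ ⧸ Ideal.span {q})] {M : ℕ} (hq : X ^ M ∣ q) :
    M ≤ Module.finrank K (K⟦X⟧ ⧸ Ideal.span {q}) := by
  have hli : LinearIndependent K
      fun i : Fin M => Ideal.Quotient.mkₐ K (Ideal.span {q}) (X ^ (i : ℕ)) := by
    rw [Fintype.linearIndependent_iff]
    intro c hc i
    have hmem : ∑ j : Fin M, c j • (X : K⟦X⟧) ^ (j : ℕ) ∈ Ideal.span {q} := by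
      rw [← Ideal.Quotient.eq_zero_iff_mem, ← Ideal.Quotient.mkₐ_eq_mk K, map_sum]
      simpa only [map_smul] using hc
    have hcoeff := X_pow_dvd_iff.mp (hq.trans (Ideal.mem_span_singleton.mp hmem)) i i.isLt
    simpa [coeff_X_pow, Fin.val_inj] using hcoeff
  simpa using hli.fintype_card_le_finrank

end PowerSeries

theorem derivative_ne_zero_of_milnorFinite {K : Type*} [Field K] {f : K⟦X⟧}
    (hf : MilnorFinite K f) : d⁄dX K f ≠ 0 := by
  have : Module.Finite K (K⟦X⟧ ⧸ Ideal.span {d⁄dX K f}) := hf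
  intro h
  have := le_finrank_quotient_span_singleton_of_X_pow_dvd (M := milnor K f + 1) (h ▸ dvd_zero _)
  exact (milnor K f).lt_succ_self.not_ge this

theorem stmt_9_general (K : Type*) [Field K]
    (f g : PowerSeries K) (hfin : MilnorFinite K f)
    (m : ℕ) (hmin : ∀ i < m, coeff i f = 0)
    (hjet : ∀ i ≤ 2 * milnor K f - m + 2, coeff i g = coeff i f) :
    RightEquiv K f g := by
  have hf : (X : K⟦X⟧) ^ m ∣ f := X_pow_dvd_iff.mpr hmin
  have hf'0 := derivative_ne_zero_of_milnorFinite hfin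
  set d := (d⁄dX K f).order.toNat
  have hf' : d⁄dX K f = X ^ d * (Unit_of_divided_by_X_pow_order (d⁄dX K f) : K⟦X⟧) := by
    rw [Unit_of_divided_by_X_pow_order_nonzero hf'0, X_pow_order_mul_divXPowOrder]
  have hdμ : d ≤ milnor K f := by
    unfold MilnorFinite at hfin
    exact le_finrank_quotient_span_singleton_of_X_pow_dvd X_pow_order_dvd
  have hmd := le_add_one_of_derivative_eq_X_pow_mul hf hf'
  have hg : X ^ (2 * milnor K f - m + 3) ∣ g - f :=
    X_pow_dvd_iff.mpr fun i hi => by rw [map_sub, hjet i (by omega), sub_self]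
  obtain ⟨u, hu, hfu⟩ := exists_subst_X_add_eq hf hf' (by omega) hg
  have hc : constantCoeff (X + u) = 0 := by
    simp [X_dvd_iff.mp ((dvd_pow_self X two_ne_zero).trans hu)]
  have h1 : coeff 1 (X + u) = 1 := by
    simp [X_pow_dvd_iff.mp hu 1 one_lt_two]
  exact ⟨substAlgEquiv hc (h1 ▸ isUnit_one), by rw [substAlgEquiv_apply, hfu]⟩

theorem stmt_9 (K : Type*) [Field K] [IsAlgClosed K] (p : ℕ) (hp : p.Prime) [CharP K p]
    (f g : PowerSeries K) (hf0 : constantCoeff f = 0) (hfin : MilnorFinite K f)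
    (m : ℕ) (hm : coeff m f ≠ 0) (hmin : ∀ i < m, coeff i f = 0)
    (hjet : ∀ i ≤ 2 * milnor K f - m + 2, coeff i g = coeff i f) :
    RightEquiv K f g :=
  stmt_9_general K f g hfin m hmin hjet
end

section
/- Let K be a field of characteristic p > 0, f ∈ K[[x]] with f(0) = 0 and Milnor number μ < ∞, and let t = (t_1, ..., t_μ) ∈ K^μ with t_i ≠ 0 for some i not divisible by p. Let n be the smallest such i. If n ≤ μ(f) and n − 1 < μ, then μ(f + Σ t_i x^i) = n − 1 < μ. In particular, perturbing f by a monomial t·x^n with p ∤ n and n ≤ μ strictly decreases the Milnor number to n − 1. -/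
/-! Over a field a nonzero power series `g` is `X ^ ord g` times a unit, so `dim K⟦X⟧ ⧸ (g) = ord g`;
in particular `μ(f) = ord f'`. As `f'` vanishes below degree `μ`, the coefficient of degree `i - 1 < μ`
of `(f + ∑ tᵢ Xⁱ)'` is `i • tᵢ`, and by minimality of `n` the first nonzero one has degree `n - 1`. -/

open PowerSeries

namespace PowerSeries

variable {K : Type*} [Field K]

theorem span_singleton_eq_span_X_pow_order {g : K⟦X⟧} (hg : g ≠ 0) :
    Ideal.span {g} = Ideal.span {X ^ g.order.toNat} := by
  conv_lhs => rw [← X_pow_order_mul_divXPowOrder (f := g)]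
  exact Ideal.span_singleton_mul_right_unit (isUnit_divided_by_X_pow_order hg) _

variable (K) in
theorem finrank_quotient_span_X_pow (d : ℕ) :
    Module.finrank K (K⟦X⟧ ⧸ Ideal.span {(X : K⟦X⟧) ^ d}) = d := by
  let trunc : K⟦X⟧ →ₗ[K] (Fin d → K) := LinearMap.pi fun i => coeff (i : ℕ)
  have htrunc_surj : Function.Surjective trunc := fun v =>
    ⟨mk fun i => if h : i < d then v ⟨i, h⟩ else 0, by ext i; simp [trunc]⟩
  have hker : (Ideal.span {(X : K⟦X⟧) ^ d}).restrictScalars K = LinearMap.ker trunc := by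
    ext h
    simp only [Submodule.restrictScalars_mem, Ideal.mem_span_singleton, X_pow_dvd_iff,
      LinearMap.mem_ker, funext_iff, Fin.forall_iff]
    rfl
  have e : (K⟦X⟧ ⧸ Ideal.span {(X : K⟦X⟧) ^ d}) ≃ₗ[K] (Fin d → K) :=
    (Submodule.Quotient.restrictScalarsEquiv K _).symm.trans
      ((Submodule.quotEquivOfEq _ _ hker).trans (trunc.quotKerEquivOfSurjective htrunc_surj))
  rw [e.finrank_eq, Module.finrank_fin_fun]

theorem finrank_quotient_span_singleton {g : K⟦X⟧} (hg : g ≠ 0) :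
    Module.finrank K (K⟦X⟧ ⧸ Ideal.span {g}) = g.order.toNat := by
  rw [span_singleton_eq_span_X_pow_order hg, finrank_quotient_span_X_pow]

/-- `K⟦X⟧` itself is infinite dimensional: it surjects onto every `K⟦X⟧ ⧸ (X ^ d)`. -/
theorem ne_zero_of_finite_quotient_span_singleton {g : K⟦X⟧}
    (h : Module.Finite K (K⟦X⟧ ⧸ Ideal.span {g})) : g ≠ 0 := by
  rintro rfl
  set d := Module.finrank K (K⟦X⟧ ⧸ Ideal.span {(0 : K⟦X⟧)}) + 1
  have hle : Ideal.span {(0 : K⟦X⟧)} ≤ Ideal.span {X ^ d} := by simp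
  have hdim := LinearMap.finrank_le_finrank_of_surjective
    (f := (Ideal.Quotient.factorₐ K hle).toLinearMap) (Ideal.Quotient.factor_surjective hle)
  rw [finrank_quotient_span_X_pow] at hdim
  omega

theorem coeff_sum_C_mul_X_pow_succ {R : Type*} [Semiring R] {m : ℕ} (t : Fin m → R)
    (j : Fin m) : coeff ((j : ℕ) + 1) (∑ i, C (t i) * X ^ ((i : ℕ) + 1)) = t j := by
  simp [coeff_C_mul, coeff_X_pow, Fin.val_inj]

end PowerSeries

section Milnor

variable {K : Type*} [Field K]

theorem milnor_eq_order_derivative {f : K⟦X⟧} (hf : d⁄dX K f ≠ 0) :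
    milnor K f = (d⁄dX K f).order.toNat :=
  finrank_quotient_span_singleton hf

theorem MilnorFinite.derivative_ne_zero {f : K⟦X⟧} (hfin : MilnorFinite K f) : d⁄dX K f ≠ 0 :=
  ne_zero_of_finite_quotient_span_singleton hfin

theorem MilnorFinite.coeff_derivative_eq_zero {f : K⟦X⟧} (hfin : MilnorFinite K f) {i : ℕ}
    (hi : i < milnor K f) : coeff i (d⁄dX K f) = 0 := by
  rw [milnor_eq_order_derivative hfin.derivative_ne_zero] at hi
  exact coeff_of_lt_order_toNat i hi

theorem milnor_eq_of_coeff_derivative {f : K⟦X⟧} {d : ℕ}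
    (hlow : ∀ i < d, coeff i (d⁄dX K f) = 0) (hd : coeff d (d⁄dX K f) ≠ 0) :
    milnor K f = d := by
  have hord : (d⁄dX K f).order = d := order_eq_nat.2 ⟨hd, hlow⟩
  have hne : d⁄dX K f ≠ 0 := fun h => by simp [h] at hord
  rw [milnor_eq_order_derivative hne, hord, ENat.toNat_natCast]

theorem MilnorFinite.coeff_derivative_add_sum {f : K⟦X⟧} (hfin : MilnorFinite K f)
    (t : Fin (milnor K f) → K) (i : Fin (milnor K f)) :
    coeff i (d⁄dX K (f + ∑ j, C (t j) * X ^ ((j : ℕ) + 1))) = t i * ((i : ℕ) + 1 : ℕ) := by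
  rw [map_add, map_add, hfin.coeff_derivative_eq_zero i.isLt, zero_add, coeff_derivative,
    coeff_sum_C_mul_X_pow_succ, Nat.cast_succ]

end Milnor

theorem stmt_18_general (K : Type*) [Field K] (p : ℕ) [CharP K p]
    (f : PowerSeries K) (hfin : MilnorFinite K f)
    (μ : ℕ) (hμ : μ = milnor K f) (t : Fin μ → K)
    (n : ℕ)
    (hne : {i : ℕ | ∃ j : Fin μ, (j : ℕ) + 1 = i ∧ t j ≠ 0 ∧ ¬ p ∣ i}.Nonempty)
    (hn : n = sInf {i : ℕ | ∃ j : Fin μ, (j : ℕ) + 1 = i ∧ t j ≠ 0 ∧ ¬ p ∣ i})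
    (hlt : n - 1 < μ) :
    milnor K (f + ∑ i, C (t i) * X ^ ((i : ℕ) + 1)) = n - 1 ∧ n - 1 < μ := by
  subst hμ
  set S := {i : ℕ | ∃ j : Fin (milnor K f), (j : ℕ) + 1 = i ∧ t j ≠ 0 ∧ ¬ p ∣ i}
  obtain ⟨j, hjn, htj, hpn⟩ := hn ▸ Nat.sInf_mem hne
  refine ⟨milnor_eq_of_coeff_derivative (fun i hi => ?_) ?_, hlt⟩
  · have hiμ : i < milnor K f := by omega
    rw [hfin.coeff_derivative_add_sum t ⟨i, hiμ⟩, mul_eq_zero, CharP.cast_eq_zero_iff K p]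
    by_contra! h
    exact Nat.notMem_of_lt_sInf (s := S) (m := i + 1) (by omega) ⟨⟨i, hiμ⟩, rfl, h⟩
  · obtain rfl : n = (j : ℕ) + 1 := hjn.symm
    rw [Nat.add_sub_cancel, hfin.coeff_derivative_add_sum t j]
    exact mul_ne_zero htj ((CharP.cast_eq_zero_iff K p _).not.2 hpn)

theorem stmt_18 (K : Type*) [Field K] (p : ℕ) (hp : p.Prime) [CharP K p]
    (f : PowerSeries K) (hf0 : constantCoeff f = 0) (hfin : MilnorFinite K f)
    (μ : ℕ) (hμ : μ = milnor K f) (t : Fin μ → K)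
    (n : ℕ)
    (hne : {i : ℕ | ∃ j : Fin μ, (j : ℕ) + 1 = i ∧ t j ≠ 0 ∧ ¬ p ∣ i}.Nonempty)
    (hn : n = sInf {i : ℕ | ∃ j : Fin μ, (j : ℕ) + 1 = i ∧ t j ≠ 0 ∧ ¬ p ∣ i})
    (hnμ : n ≤ μ) (hlt : n - 1 < μ) :
    milnor K (f + ∑ i, C (t i) * X ^ ((i : ℕ) + 1)) = n - 1 ∧ n - 1 < μ :=
  stmt_18_general K p f hfin μ hμ t n hne hn hlt
end
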